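/- Let n ≥ 2, let e₁,…,e_{n+1} be the standard basis of ℂ^{n+1}, and let z = [z₁,…,z_{n+1}] ∈ ∂ℍⁿ_ℂ \ {[e₁],[e_{n+1}]}. Define φ_z on the projective subspace Span({e₂,…,e_n}) by φ_z(w) = Span((Span((Span({w, e_{n+1}}) ∩ z^⊥) ∪ {z}) ∩ e₁^⊥) ∪ {e₁}) ∩ e_{n+1}^⊥. Then, identifying Span({e₂,…,e_n}) with ℙ^{n−2}_ℂ via [0,w₂,…,w_n,0] ↔ [w₂,…,w_n], φ_z coincides with the projectivization [[M_z]] of the (n−1)×(n−1) matrix M_z whose (i,j) entry is z_{i+1} z̄_{j+1} for i ≠ j and z_{n+1} z̄₁ + |z_{i+1}|² for i = j (1 ≤ i,j ≤ n−1). -/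

import Mathlib

/-!
Each step of `φ_z` intersects a projective line with a hyperplane `ker f`; when `f b ≠ 0`, the line
through `[a]` and `[b]` meets it exactly in `[f(b) a - f(a) b]`. Chaining the three intersections
gives an explicit vector whose first and last coordinates vanish and whose middle coordinates are
`M_z w`. It is nonzero because `M_z = λ I + z' z'^*` with `z'` the middle part of `z` and
`λ = z_{n+1} z̄₁`: the null condition reads `λ + λ̄ + |z'|² = 0`, so `M_z u = 0` forces
`λ̄ ⟨u, z'⟩ = 0`, hence `u = 0`; and `λ ≠ 0` because a null `z` with `z₁ = 0` or `z_{n+1} = 0` has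
`z' = 0`, i.e. is `[e_{n+1}]` or `[e₁]`.
-/

noncomputable section

open scoped ComplexConjugate
open scoped Matrix

namespace CKG

/-- The underlying vector space `ℂ^{n+1}`. -/
abbrev Vc (n : ℕ) := Fin (n + 1) → ℂ

instance projTopInst (K V : Type*) [DivisionRing K] [AddCommGroup V] [Module K V]
    [TopologicalSpace V] : TopologicalSpace (Projectivization K V) :=
  inferInstanceAs (TopologicalSpace (Quotient (projectivizationSetoid K V)))

/-- The complex projective space `ℙⁿ_ℂ`. -/
abbrev Prj (n : ℕ) := Projectivization ℂ (Vc n)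

/-- The Hermitian matrix `H` with ones at the corners `(1,n+1)`, `(n+1,1)` and the identity
in the central `(n-1) × (n-1)` block. -/
def Hmat (n : ℕ) : Matrix (Fin (n + 1)) (Fin (n + 1)) ℂ := fun i j =>
  if (i = 0 ∧ j = Fin.last n) ∨ (i = Fin.last n ∧ j = 0) ∨
      (i = j ∧ i ≠ 0 ∧ i ≠ Fin.last n) then 1 else 0

/-- The Hermitian form of signature `(1,n)` induced by `H`. -/
def herm (n : ℕ) (v w : Vc n) : ℂ := ∑ i, ∑ j, v i * Hmat n i j * conj (w j)

/-- The projective hyperplane `p^⊥` of points orthogonal to `p`. -/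
def orthHyp (n : ℕ) (p : Prj n) : Set (Prj n) := {q | herm n q.rep p.rep = 0}

/-- The projective span of a set of points of `ℙⁿ_ℂ`, as a set of points. -/
def projSpan (n : ℕ) (S : Set (Prj n)) : Set (Prj n) :=
  {r | r.rep ∈ Submodule.span ℂ (Projectivization.rep '' S)}

/-- The standard basis vector `e₁`. -/
def e1v (n : ℕ) : Vc n := Pi.single 0 1

/-- The standard basis vector `e_{n+1}`. -/
def eN1v (n : ℕ) : Vc n := Pi.single (Fin.last n) 1

lemma e1v_ne_zero (n : ℕ) : e1v n ≠ 0 := by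
  intro h; have := congrFun h 0; simp [e1v] at this

lemma eN1v_ne_zero (n : ℕ) : eN1v n ≠ 0 := by
  intro h; have := congrFun h (Fin.last n); simp [eN1v] at this

/-- The point `[e₁] ∈ ℙⁿ_ℂ`. -/
def e1pt (n : ℕ) : Prj n := Projectivization.mk ℂ (e1v n) (e1v_ne_zero n)

/-- The point `[e_{n+1}] ∈ ℙⁿ_ℂ`. -/
def eN1pt (n : ℕ) : Prj n := Projectivization.mk ℂ (eN1v n) (eN1v_ne_zero n)

/-- The inclusion of indices `{1, …, n-1}` (numbering `e₂, …, e_n`) into `Fin (n+1)`. -/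
def idx {n : ℕ} (i : Fin (n - 1)) : Fin (n + 1) := ⟨i.val + 1, by omega⟩

/-- The `(n-1) × (n-1)` matrix `M_z` with `(i,j)` entry `z_{i+1} z̄_{j+1}` for `i ≠ j` and
`z_{n+1} z̄₁ + |z_{i+1}|²` for `i = j`. -/
def Mz (n : ℕ) (z : Vc n) : Matrix (Fin (n - 1)) (Fin (n - 1)) ℂ := fun i j =>
  (if i = j then z (Fin.last n) * conj (z 0) else 0) + z (idx i) * conj (z (idx j))

/-- The embedding `ℂ^{n-1} → ℂ^{n+1}` into the coordinates `2, …, n`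
(realizing the identification of `ℙ^{n-2}_ℂ` with `Span({e₂,…,e_n})`). -/
def embedMid (n : ℕ) (u : Fin (n - 1) → ℂ) : Vc n :=
  fun i => ∑ j : Fin (n - 1), if idx j = i then u j else 0

/-- The projection `ℂ^{n+1} → ℂ^{n-1}` onto the coordinates `2, …, n`. -/
def midOf (n : ℕ) (v : Vc n) : Fin (n - 1) → ℂ := fun j => v (idx j)

/-- The Cartan angular invariant `𝔸(x,y,w) = arg(−⟨x,y⟩⟨y,w⟩⟨w,x⟩)`. -/
def cartanArg (n : ℕ) (x y w : Vc n) : ℝ :=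
  Complex.arg (-(herm n x y * herm n y w * herm n w x))

/-- The map `φ_z` of the paper, at the level of sets:
`φ_z(w) = Span((Span((Span({w,e_{n+1}}) ∩ z^⊥) ∪ {z}) ∩ e₁^⊥) ∪ {e₁}) ∩ e_{n+1}^⊥`. -/
def phiSet (n : ℕ) (z w : Prj n) : Set (Prj n) :=
  projSpan n
    ((projSpan n ((projSpan n {w, eN1pt n} ∩ orthHyp n z) ∪ {z}) ∩ orthHyp n (e1pt n))
      ∪ {e1pt n}) ∩ orthHyp n (eN1pt n)

end CKG

namespace LinearMap

variable {K V : Type*} [Field K] [AddCommGroup V] [Module K V]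

def lineMeet (f : V →ₗ[K] K) (a b : V) : V := f b • a - f a • b

@[simp] lemma lineMeet_zero_left (f : V →ₗ[K] K) (b : V) : f.lineMeet 0 b = 0 := by
  simp [lineMeet]

lemma span_pair_inf_ker {f : V →ₗ[K] K} (a : V) {b : V} (hb : f b ≠ 0) :
    Submodule.span K {a, b} ⊓ ker f = K ∙ f.lineMeet a b := by
  ext x
  simp only [Submodule.mem_inf, Submodule.mem_span_pair, mem_ker,
    Submodule.mem_span_singleton, lineMeet]
  constructor
  · rintro ⟨⟨s, t, rfl⟩, hx⟩
    have ht : t = -(s * f a) / f b := by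
      rw [map_add, map_smul, map_smul, smul_eq_mul, smul_eq_mul] at hx
      field_simp
      linear_combination hx
    refine ⟨s / f b, ?_⟩
    rw [ht]
    match_scalars <;> field_simp
  · rintro ⟨c, rfl⟩
    refine ⟨⟨c * f b, -(c * f a), by module⟩, ?_⟩
    simp only [map_smul, map_sub, smul_eq_mul]
    ring

end LinearMap

namespace Projectivization

variable {K V : Type*} [Field K] [AddCommGroup V] [Module K V]

lemma span_singleton_rep_mk {v : V} (hv : v ≠ 0) : K ∙ (mk K v hv).rep = K ∙ v := by
  rw [← submodule_eq, submodule_mk]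

lemma span_rep_pair_mk {a b : V} (ha : a ≠ 0) (hb : b ≠ 0) :
    Submodule.span K {(mk K a ha).rep, (mk K b hb).rep} = Submodule.span K {a, b} := by
  rw [Submodule.span_insert, Submodule.span_insert, span_singleton_rep_mk, span_singleton_rep_mk]

lemma eq_mk_iff_rep_mem_span_singleton (r : Projectivization K V) {v : V} (hv : v ≠ 0) :
    r = mk K v hv ↔ r.rep ∈ K ∙ v := by
  conv_lhs => rw [← r.mk_rep]
  rw [mk_eq_mk_iff', Submodule.mem_span_singleton]

lemma eq_mk_iff_exists_smul (r : Projectivization K V) {v : V} (hv : v ≠ 0) :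
    r = mk K v hv ↔ ∃ c : K, c ≠ 0 ∧ r.rep = c • v := by
  rw [eq_mk_iff_rep_mem_span_singleton, Submodule.mem_span_singleton]
  constructor
  · rintro ⟨c, hc⟩
    refine ⟨c, ?_, hc.symm⟩
    rintro rfl
    exact r.rep_nonzero (by rw [← hc, zero_smul])
  · rintro ⟨c, -, hc⟩
    exact ⟨c, hc.symm⟩

end Projectivization

namespace Matrix

variable {K m : Type*} [Field K] [StarRing K] [Fintype m] [DecidableEq m]

lemma eq_zero_of_smul_one_add_vecMulVec_star_mulVec_eq_zero {c : K} (hc : c ≠ 0)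
    {u : m → K} (hu : c + star c + u ⬝ᵥ star u = 0) {x : m → K}
    (hx : (c • 1 + vecMulVec u (star u)) *ᵥ x = 0) : x = 0 := by
  rw [add_mulVec, smul_mulVec, one_mulVec, vecMulVec_mulVec, op_smul_eq_smul] at hx
  set s := star u ⬝ᵥ x
  have hs : s * star c = 0 := by
    have h := congrArg (star u ⬝ᵥ ·) hx
    simp only [dotProduct_add, dotProduct_smul, dotProduct_zero, smul_eq_mul,
      dotProduct_comm (star u) u] at h
    linear_combination s * hu - h
  have hs0 : s = 0 := (mul_eq_zero.mp hs).resolve_right (star_ne_zero.mpr hc)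
  rw [hs0] at hx
  simpa [hc] using hx

end Matrix

namespace CKG

open scoped ComplexOrder

variable {n : ℕ}

lemma idx_ne_zero (i : Fin (n - 1)) : idx i ≠ 0 := by
  simp [idx, Fin.ext_iff]

lemma idx_ne_last (i : Fin (n - 1)) : idx i ≠ Fin.last n := by
  simp only [idx, ne_eq, Fin.ext_iff, Fin.val_last]
  omega

lemma idx_injective : Function.Injective (idx (n := n)) := fun a b h => by
  simpa [idx, Fin.ext_iff] using h

lemma zero_ne_last (hn : 1 ≤ n) : (0 : Fin (n + 1)) ≠ Fin.last n := by
  simp only [ne_eq, Fin.ext_iff, Fin.val_zero, Fin.val_last]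
  omega

lemma eq_zero_or_eq_last_or_exists_eq_idx (j : Fin (n + 1)) :
    j = 0 ∨ j = Fin.last n ∨ ∃ i : Fin (n - 1), j = idx i := by
  rcases Nat.eq_zero_or_pos j.val with h0 | hpos
  · exact Or.inl (Fin.ext h0)
  rcases eq_or_ne j.val n with hl | hne
  · exact Or.inr (Or.inl (Fin.ext hl))
  · refine Or.inr (Or.inr ⟨⟨j.val - 1, by omega⟩, ?_⟩)
    simp only [idx, Fin.ext_iff]
    omega

lemma ext_of_coords {v v' : Vc n} (h0 : v 0 = v' 0) (hl : v (Fin.last n) = v' (Fin.last n))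
    (hmid : midOf n v = midOf n v') : v = v' := by
  funext j
  rcases eq_zero_or_eq_last_or_exists_eq_idx j with rfl | rfl | ⟨i, rfl⟩
  exacts [h0, hl, congrFun hmid i]

lemma sum_univ_eq_zero_add_last_add_idx {M : Type*} [AddCommMonoid M] (hn : 1 ≤ n)
    (f : Fin (n + 1) → M) :
    ∑ j, f j = f 0 + f (Fin.last n) + ∑ i : Fin (n - 1), f (idx i) := by
  have huniv : (Finset.univ : Finset (Fin (n + 1))) =
      insert 0 (insert (Fin.last n) (Finset.univ.image idx)) := by
    ext j
    simp only [Finset.mem_univ, Finset.mem_insert, Finset.mem_image, true_and, true_iff]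
    rcases eq_zero_or_eq_last_or_exists_eq_idx j with h | h | ⟨i, h⟩
    exacts [Or.inl h, Or.inr (Or.inl h), Or.inr (Or.inr ⟨i, h.symm⟩)]
  rw [huniv, Finset.sum_insert, Finset.sum_insert, Finset.sum_image idx_injective.injOn, add_assoc]
  · simpa using fun i => idx_ne_last i
  · simpa [zero_ne_last hn, eq_comm] using fun i => idx_ne_zero i

lemma Hmat_apply (i j : Fin (n + 1)) :
    Hmat n i j = if j = Equiv.swap 0 (Fin.last n) i then 1 else 0 := by
  rw [Hmat, Equiv.swap_apply_def]
  split_ifs <;> grind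

lemma herm_eq_sum_swap (v w : Vc n) :
    herm n v w = ∑ i, v i * conj (w (Equiv.swap 0 (Fin.last n) i)) := by
  simp [herm, Hmat_apply]

lemma herm_eq (hn : 1 ≤ n) (v w : Vc n) :
    herm n v w = v 0 * conj (w (Fin.last n)) + v (Fin.last n) * conj (w 0)
      + midOf n v ⬝ᵥ star (midOf n w) := by
  rw [herm_eq_sum_swap, sum_univ_eq_zero_add_last_add_idx hn]
  simp [Equiv.swap_apply_of_ne_of_ne, idx_ne_zero, idx_ne_last, dotProduct, midOf]

lemma herm_smul_right (c : ℂ) (v w : Vc n) : herm n v (c • w) = conj c * herm n v w := by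
  simp [herm_eq_sum_swap, Finset.mul_sum, mul_left_comm]

def hermL (w : Vc n) : Vc n →ₗ[ℂ] ℂ where
  toFun v := herm n v w
  map_add' v v' := by simp [herm_eq_sum_swap, add_mul, Finset.sum_add_distrib]
  map_smul' c v := by simp [herm_eq_sum_swap, Finset.mul_sum, mul_assoc]

@[simp] lemma hermL_apply (w v : Vc n) : hermL w v = herm n v w := rfl

lemma herm_e1v_right (v : Vc n) : herm n v (e1v n) = v (Fin.last n) := by
  simp [herm_eq_sum_swap, e1v, Pi.single_apply, Equiv.swap_apply_eq_iff]

lemma herm_eN1v_right (v : Vc n) : herm n v (eN1v n) = v 0 := by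
  simp [herm_eq_sum_swap, eN1v, Pi.single_apply, Equiv.swap_apply_eq_iff]

lemma herm_eN1v_left (w : Vc n) : herm n (eN1v n) w = conj (w 0) := by
  simp [herm_eq_sum_swap, eN1v, Pi.single_apply]

@[simp] lemma e1v_zero : e1v n 0 = 1 := by simp [e1v]

lemma e1v_last (hn : 1 ≤ n) : e1v n (Fin.last n) = 0 := by
  simp [e1v, Pi.single_eq_of_ne (zero_ne_last hn).symm]

@[simp] lemma e1v_idx (i : Fin (n - 1)) : e1v n (idx i) = 0 := by
  simp [e1v, Pi.single_eq_of_ne (idx_ne_zero i)]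

lemma eN1v_zero (hn : 1 ≤ n) : eN1v n 0 = 0 := by
  simp [eN1v, Pi.single_eq_of_ne (zero_ne_last hn)]

@[simp] lemma eN1v_last : eN1v n (Fin.last n) = 1 := by simp [eN1v]

@[simp] lemma eN1v_idx (i : Fin (n - 1)) : eN1v n (idx i) = 0 := by
  simp [eN1v, Pi.single_eq_of_ne (idx_ne_last i)]

@[simp] lemma embedMid_zero (u : Fin (n - 1) → ℂ) : embedMid n u 0 = 0 :=
  Finset.sum_eq_zero fun j _ => if_neg (idx_ne_zero j)

@[simp] lemma embedMid_last (u : Fin (n - 1) → ℂ) : embedMid n u (Fin.last n) = 0 :=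
  Finset.sum_eq_zero fun j _ => if_neg (idx_ne_last j)

@[simp] lemma embedMid_idx (u : Fin (n - 1) → ℂ) (i : Fin (n - 1)) :
    embedMid n u (idx i) = u i := by
  simp [embedMid, idx_injective.eq_iff]

lemma embedMid_ne_zero {u : Fin (n - 1) → ℂ} (hu : u ≠ 0) : embedMid n u ≠ 0 := by
  contrapose! hu
  funext i
  rw [← embedMid_idx u i, hu, Pi.zero_apply, Pi.zero_apply]

lemma Mz_eq_smul_one_add_vecMulVec (z : Vc n) :
    Mz n z = (z (Fin.last n) * conj (z 0)) • 1 + Matrix.vecMulVec (midOf n z) (star (midOf n z)) := by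
  ext i j
  by_cases h : i = j <;> simp [Mz, Matrix.vecMulVec_apply, midOf, h]

lemma apply_zero_ne_zero_of_null (hn : 1 ≤ n) {z : Vc n} (hz : z ≠ 0) (hnull : herm n z z = 0)
    (hzN : Projectivization.mk ℂ z hz ≠ eN1pt n) : z 0 ≠ 0 := by
  intro h0
  have hmid : midOf n z = 0 := by
    rw [herm_eq hn, h0] at hnull
    exact dotProduct_self_star_eq_zero.mp (by simpa using hnull)
  refine hzN ((Projectivization.mk_eq_mk_iff' ℂ _ _ _ _).mpr ⟨z (Fin.last n), ?_⟩)
  refine ext_of_coords (by simp [h0, eN1v_zero hn]) (by simp) ?_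
  rw [hmid]
  ext i
  simp [midOf]

lemma apply_last_ne_zero_of_null (hn : 1 ≤ n) {z : Vc n} (hz : z ≠ 0) (hnull : herm n z z = 0)
    (hz1 : Projectivization.mk ℂ z hz ≠ e1pt n) : z (Fin.last n) ≠ 0 := by
  intro hl
  have hmid : midOf n z = 0 := by
    rw [herm_eq hn, hl] at hnull
    exact dotProduct_self_star_eq_zero.mp (by simpa using hnull)
  refine hz1 ((Projectivization.mk_eq_mk_iff' ℂ _ _ _ _).mpr ⟨z 0, ?_⟩)
  refine ext_of_coords (by simp) (by simp [hl, e1v_last hn]) ?_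
  rw [hmid]
  ext i
  simp [midOf]

lemma Mz_mulVec_ne_zero (hn : 1 ≤ n) {z : Vc n} (hnull : herm n z z = 0) (hz0 : z 0 ≠ 0)
    (hzl : z (Fin.last n) ≠ 0) {u : Fin (n - 1) → ℂ} (hu : u ≠ 0) : Mz n z *ᵥ u ≠ 0 := by
  rw [Mz_eq_smul_one_add_vecMulVec]
  refine fun h => hu (Matrix.eq_zero_of_smul_one_add_vecMulVec_star_mulVec_eq_zero
    (mul_ne_zero hzl ((map_ne_zero _).mpr hz0)) ?_ h)
  rw [herm_eq hn] at hnull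
  simp only [Complex.star_def, map_mul, Complex.conj_conj]
  linear_combination hnull

lemma projSpan_pair_inter_ker {a b : Vc n} (ha : a ≠ 0) (hb : b ≠ 0) (f : Vc n →ₗ[ℂ] ℂ)
    (hfb : f b ≠ 0) (hv : f.lineMeet a b ≠ 0) :
    projSpan n {Projectivization.mk ℂ a ha, Projectivization.mk ℂ b hb} ∩ {r | f r.rep = 0} =
      {Projectivization.mk ℂ (f.lineMeet a b) hv} := by
  ext r
  rw [Set.mem_singleton_iff, Projectivization.eq_mk_iff_rep_mem_span_singleton,
    ← f.span_pair_inf_ker a hfb, ← Projectivization.span_rep_pair_mk ha hb]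
  simp [projSpan, Set.image_pair]

lemma orthHyp_mk {v : Vc n} (hv : v ≠ 0) :
    orthHyp n (Projectivization.mk ℂ v hv) = {r | hermL v r.rep = 0} := by
  obtain ⟨a, ha⟩ := Projectivization.exists_smul_eq_mk_rep ℂ v hv
  ext r
  simp [orthHyp, ← ha, Units.smul_def, herm_smul_right]

lemma orthHyp_e1pt : orthHyp n (e1pt n) = {r | (LinearMap.proj (Fin.last n) : Vc n →ₗ[ℂ] ℂ) r.rep = 0} := by
  simp [e1pt, orthHyp_mk, herm_e1v_right]

lemma orthHyp_eN1pt : orthHyp n (eN1pt n) = {r | (LinearMap.proj 0 : Vc n →ₗ[ℂ] ℂ) r.rep = 0} := by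
  simp [eN1pt, orthHyp_mk, herm_eN1v_right]

def phiVec (z w : Vc n) : Vc n :=
  (LinearMap.proj 0 : Vc n →ₗ[ℂ] ℂ).lineMeet
    ((LinearMap.proj (Fin.last n) : Vc n →ₗ[ℂ] ℂ).lineMeet ((hermL z).lineMeet w (eN1v n)) z)
    (e1v n)

lemma phiSet_mk {z w : Vc n} (hz : z ≠ 0) (hw : w ≠ 0) (hz0 : z 0 ≠ 0)
    (hzl : z (Fin.last n) ≠ 0) (hφ : phiVec z w ≠ 0) :
    phiSet n (Projectivization.mk ℂ z hz) (Projectivization.mk ℂ w hw) =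
      {Projectivization.mk ℂ (phiVec z w) hφ} := by
  have h2 : (LinearMap.proj (Fin.last n) : Vc n →ₗ[ℂ] ℂ).lineMeet
      ((hermL z).lineMeet w (eN1v n)) z ≠ 0 := fun h => hφ (by simp [phiVec, h])
  have h1 : (hermL z).lineMeet w (eN1v n) ≠ 0 := fun h => h2 (by simp [h])
  rw [phiSet, orthHyp_e1pt, orthHyp_eN1pt, e1pt, eN1pt, orthHyp_mk,
    projSpan_pair_inter_ker _ _ _ (by simpa [herm_eN1v_left] using hz0) h1, Set.singleton_union,
    projSpan_pair_inter_ker _ _ _ hzl h2, Set.singleton_union,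
    projSpan_pair_inter_ker _ _ _ (by simp) hφ]
  rfl

lemma phiVec_eq_embedMid (hn : 1 ≤ n) (z : Vc n) {w : Vc n} (hw0 : w 0 = 0)
    (hwl : w (Fin.last n) = 0) : phiVec z w = embedMid n (Mz n z *ᵥ midOf n w) := by
  have hS : hermL z w = midOf n w ⬝ᵥ star (midOf n z) := by
    simp [herm_eq hn, hw0, hwl]
  apply ext_of_coords
  · simp [phiVec, LinearMap.lineMeet]
  · simp [phiVec, LinearMap.lineMeet, e1v_last hn, hw0, hwl, hS]
    ring
  · ext i
    simp only [phiVec, LinearMap.lineMeet, hS, Mz_eq_smul_one_add_vecMulVec, Matrix.add_mulVec,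
      Matrix.smul_mulVec, Matrix.one_mulVec, Matrix.vecMulVec_mulVec, op_smul_eq_smul,
      dotProduct_comm (star (midOf n z))]
    simp [midOf, herm_eN1v_left, hwl]
    ring

theorem phi_z_eq_proj_Mz_general
    (n : ℕ) (zv : Vc n) (hzne : zv ≠ 0)
    (hbd : herm n zv zv = 0)
    (hz1 : Projectivization.mk ℂ zv hzne ≠ e1pt n)
    (hz2 : Projectivization.mk ℂ zv hzne ≠ eN1pt n)
    (w : Prj n) (hw0 : w.rep 0 = 0) (hwlast : w.rep (Fin.last n) = 0) :
    ∀ r : Prj n,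
      r ∈ phiSet n (Projectivization.mk ℂ zv hzne) w ↔
      ∃ c : ℂ, c ≠ 0 ∧
        r.rep = c • embedMid n ((Mz n zv).mulVec (midOf n w.rep)) := by
  intro r
  have hmid : midOf n w.rep ≠ 0 := fun h =>
    w.rep_nonzero (ext_of_coords (by simpa using hw0) (by simpa using hwlast) h)
  obtain ⟨i, -⟩ := Function.ne_iff.mp hmid
  have hn : 1 ≤ n := by have := i.isLt; omega
  have hz0 := apply_zero_ne_zero_of_null hn hzne hbd hz2
  have hzl := apply_last_ne_zero_of_null hn hzne hbd hz1
  have hvec := phiVec_eq_embedMid hn zv hw0 hwlast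
  have hφ : phiVec zv w.rep ≠ 0 := hvec ▸ embedMid_ne_zero (Mz_mulVec_ne_zero hn hbd hz0 hzl hmid)
  have hset := phiSet_mk hzne w.rep_nonzero hz0 hzl hφ
  rw [Projectivization.mk_rep] at hset
  rw [hset, Set.mem_singleton_iff, Projectivization.eq_mk_iff_exists_smul, hvec]

/-- For `z ∈ ∂ℍⁿ_ℂ \\ {[e₁],[e_{n+1}]}`, the map `φ_z` on
`Span({e₂,…,e_n})` coincides, under the identification `[0,w₂,…,w_n,0] ↔ [w₂,…,w_n]`, with the
projectivization of the matrix `M_z`. -/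
theorem phi_z_eq_proj_Mz
    (n : ℕ) (hn : 2 ≤ n) (zv : Vc n) (hzne : zv ≠ 0)
    (hbd : herm n zv zv = 0)
    (hz1 : Projectivization.mk ℂ zv hzne ≠ e1pt n)
    (hz2 : Projectivization.mk ℂ zv hzne ≠ eN1pt n)
    (w : Prj n) (hw0 : w.rep 0 = 0) (hwlast : w.rep (Fin.last n) = 0) :
    ∀ r : Prj n,
      r ∈ phiSet n (Projectivization.mk ℂ zv hzne) w ↔
      ∃ c : ℂ, c ≠ 0 ∧
        r.rep = c • embedMid n ((Mz n zv).mulVec (midOf n w.rep)) :=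
  phi_z_eq_proj_Mz_general n zv hzne hbd hz1 hz2 w hw0 hwlast

end CKG
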